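/- arXiv:2204.11099 — 5 statements merged into one kernel-verified Lean document; each statement's English description precedes it below -/
import Mathlib

section
/- Let X = {X_Q} be a family of normalized quasi-Banach function spaces. Suppose there is a constant C such that for every cube Q and every function f with ‖f‖_{exp L(Q)} ≤ 1 one has ‖f‖_{X_Q} ≤ C. Then for every cube Q, every γ ∈ (0,1), and every nested sequence of measurable sets Ω_k ⊂ Q with |Ω_k| ≤ γ^k|Q|, one has ‖Σ_{k=0}^∞ χ_{Ω_k}‖_{X_Q} ≤ C·C'_γ, where C'_γ depends only on γ. -/
open MeasureTheory Set ENNReal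

noncomputable section

def IsCube {n : ℕ} (Q : Set (Fin n → ℝ)) : Prop :=
  ∃ (a : Fin n → ℝ) (r : ℝ), 0 < r ∧ Q = Set.Icc a (fun i => a i + r)

/-- The normalized Luxemburg norm of `exp L(Q)`:
`‖f‖_{exp L(Q)} = inf{α > 0 : (1/|Q|) ∫_Q (e^{|f|/α} - 1) ≤ 1}`. -/
def expLNorm {n : ℕ} (Q : Set (Fin n → ℝ)) (f : (Fin n → ℝ) → ℝ) : ℝ :=
  sInf {a : ℝ | 0 < a ∧
    ∫⁻ x in Q, ENNReal.ofReal (Real.exp (|f x| / a) - 1) ≤ volume Q}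

/-!
With `c = ½ log(1/γ)` and `φ = Σ χ_{Ω_k}`, nestedness gives the layer-cake bound
`e^{cφ} - 1 ≤ Σ_j (e^{c(j+1)} - e^{cj}) χ_{Ω_j}`, so `|Ω_j| ≤ γ^j |Q|` makes
`⨍_Q (e^{cφ} - 1)` at most the sum of the geometric series `e^c Σ_j (e^c γ)^j`, which converges
since `e^c γ = √γ < 1`. Convexity of `exp` then shows `‖φ‖_{exp L(Q)} ≤ C'_γ`, and the
homogeneity of `X_Q` turns the hypothesis into `‖φ‖_{X_Q} ≤ C C'_γ`.
-/

section NestedSets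

variable {α : Type*} {Ω : ℕ → Set α}

theorem Antitone.exists_forall_mem_iff_lt (hΩ : Antitone Ω) {x : α} (hx : ∃ k, x ∉ Ω k) :
    ∃ m : ℕ, ∀ k, x ∈ Ω k ↔ k < m := by
  classical
  refine ⟨Nat.find hx, fun k => ⟨fun hk => ?_, fun hk => ?_⟩⟩
  · by_contra! hle
    exact Nat.find_spec hx (hΩ hle hk)
  · by_contra hk'
    exact Nat.find_min hx hk hk'

theorem tsum_indicator_one_eq_of_mem_iff_lt {x : α} {m : ℕ} (hm : ∀ k, x ∈ Ω k ↔ k < m) :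
    ∑' k, (Ω k).indicator (fun _ => (1 : ℝ)) x = m := by
  rw [tsum_eq_sum (s := Finset.range m) fun k hk =>
    indicator_of_notMem (fun h => hk (Finset.mem_range.2 ((hm k).1 h))) _]
  rw [Finset.sum_congr rfl fun k hk => indicator_of_mem ((hm k).2 (Finset.mem_range.1 hk)) _]
  simp

/-- Where `x` lies in every `Ω k` the real `tsum` is not summable and takes the junk value `0`,
so the bound is trivial there. -/
theorem ofReal_sub_le_tsum_indicator (hΩ : Antitone Ω) {F : ℝ → ℝ} (hF : Monotone F) (x : α) :
    ENNReal.ofReal (F (∑' k, (Ω k).indicator (fun _ => (1 : ℝ)) x) - F 0) ≤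
      ∑' j : ℕ, (Ω j).indicator (fun _ => ENNReal.ofReal (F (j + 1) - F j)) x := by
  by_cases hx : ∃ k, x ∉ Ω k
  · obtain ⟨m, hm⟩ := hΩ.exists_forall_mem_iff_lt hx
    rw [tsum_indicator_one_eq_of_mem_iff_lt hm]
    calc ENNReal.ofReal (F m - F 0)
        = ∑ j ∈ Finset.range m, ENNReal.ofReal (F (j + 1) - F j) := by
          have htel := Finset.sum_range_sub (fun j : ℕ => F j) m
          push_cast at htel
          rw [← ENNReal.ofReal_sum_of_nonneg fun j _ => sub_nonneg.2 (hF (by linarith)), htel]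
      _ = ∑ j ∈ Finset.range m, (Ω j).indicator
            (fun _ => ENNReal.ofReal (F (j + 1) - F j)) x :=
          Finset.sum_congr rfl fun j hj =>
            (indicator_of_mem (f := fun _ => ENNReal.ofReal (F (j + 1) - F j))
              ((hm j).2 (Finset.mem_range.1 hj))).symm
      _ ≤ _ := ENNReal.sum_le_tsum _
  · simp only [not_exists, not_not] at hx
    have hnot : ¬Summable fun k => (Ω k).indicator (fun _ => (1 : ℝ)) x := by
      simp [indicator_of_mem (hx _), summable_const_iff]
    simp [tsum_eq_zero_of_not_summable hnot]

variable [MeasurableSpace α]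

theorem lintegral_exp_mul_tsum_indicator_le {μ : Measure α} (hΩm : ∀ k, MeasurableSet (Ω k))
    (hΩ : Antitone Ω) {γ s : ℝ} {M : ℝ≥0∞} (hγ : 0 ≤ γ) (hs : 0 ≤ s)
    (hsγ : Real.exp s * γ < 1) (hμ : ∀ k, μ (Ω k) ≤ ENNReal.ofReal (γ ^ k) * M) :
    ∫⁻ x, ENNReal.ofReal (Real.exp (s * ∑' k, (Ω k).indicator (fun _ => (1 : ℝ)) x) - 1) ∂μ ≤
      ENNReal.ofReal (Real.exp s / (1 - Real.exp s * γ)) * M := by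
  have hexp : Monotone fun t => Real.exp (s * t) := fun t u htu =>
    Real.exp_le_exp.2 (mul_le_mul_of_nonneg_left htu hs)
  have hr : 0 ≤ Real.exp s * γ := by positivity
  have hterm : ∀ j : ℕ, Real.exp (s * (j + 1)) * γ ^ j = Real.exp s * (Real.exp s * γ) ^ j := by
    intro j
    rw [mul_pow, ← Real.exp_nat_mul, mul_add_one, Real.exp_add]
    ring_nf
  calc ∫⁻ x, ENNReal.ofReal (Real.exp (s * ∑' k, (Ω k).indicator (fun _ => (1 : ℝ)) x) - 1) ∂μ
      ≤ ∫⁻ x, ∑' j : ℕ, (Ω j).indicator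
          (fun _ => ENNReal.ofReal (Real.exp (s * (j + 1)) - Real.exp (s * j))) x ∂μ :=
        lintegral_mono fun x => by
          simpa using ofReal_sub_le_tsum_indicator hΩ hexp x
    _ = ∑' j : ℕ, ENNReal.ofReal (Real.exp (s * (j + 1)) - Real.exp (s * j)) * μ (Ω j) := by
        rw [lintegral_tsum fun j => (measurable_const.indicator (hΩm j)).aemeasurable]
        simp only [lintegral_indicator_const (hΩm _)]
    _ ≤ ∑' j : ℕ, ENNReal.ofReal (Real.exp s * (Real.exp s * γ) ^ j) * M := by
        refine ENNReal.tsum_le_tsum fun j => ?_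
        calc ENNReal.ofReal (Real.exp (s * (j + 1)) - Real.exp (s * j)) * μ (Ω j)
            ≤ ENNReal.ofReal (Real.exp (s * (j + 1))) * (ENNReal.ofReal (γ ^ j) * M) := by
              gcongr
              · linarith [Real.exp_pos (s * j)]
              · exact hμ j
          _ = _ := by
              rw [← mul_assoc, ← ENNReal.ofReal_mul (Real.exp_nonneg _), hterm]
    _ = ENNReal.ofReal (Real.exp s / (1 - Real.exp s * γ)) * M := by
        rw [ENNReal.tsum_mul_right, ← ENNReal.ofReal_tsum_of_nonneg (fun j => by positivity)
          ((summable_geometric_of_lt_one hr hsγ).mul_left _), tsum_mul_left,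
          tsum_geometric_of_lt_one hr hsγ, div_eq_mul_inv]

end NestedSets

theorem Real.exp_div_sub_one_le {K : ℝ} (hK : 1 ≤ K) (t : ℝ) :
    Real.exp (t / K) - 1 ≤ (Real.exp t - 1) / K := by
  have hK0 : 0 < K := by linarith
  have h := convexOn_exp.2 (mem_univ t) (mem_univ 0) (inv_nonneg.2 hK0.le)
    (sub_nonneg.2 (inv_le_one_of_one_le₀ hK)) (add_sub_cancel _ _)
  simp only [smul_eq_mul, mul_zero, add_zero, Real.exp_zero, mul_one] at h
  rw [div_eq_inv_mul t, sub_div, div_eq_inv_mul, one_div]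
  linarith

theorem expLNorm_le {n : ℕ} {Q : Set (Fin n → ℝ)} {f : (Fin n → ℝ) → ℝ} {a : ℝ} (ha : 0 < a)
    (h : ∫⁻ x in Q, ENNReal.ofReal (Real.exp (|f x| / a) - 1) ≤ volume Q) :
    expLNorm Q f ≤ a :=
  csInf_le ⟨0, fun _ hb => hb.1.le⟩ ⟨ha, h⟩

theorem expLNorm_div_le_one {n : ℕ} {Q : Set (Fin n → ℝ)} {f : (Fin n → ℝ) → ℝ} {K : ℝ}
    (hK : 1 ≤ K) (h : ∫⁻ x in Q, ENNReal.ofReal (Real.exp |f x| - 1) ≤ ENNReal.ofReal K * volume Q) :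
    expLNorm Q (fun x => f x / K) ≤ 1 := by
  have hK0 : 0 < K := by linarith
  refine expLNorm_le one_pos ?_
  calc ∫⁻ x in Q, ENNReal.ofReal (Real.exp (|f x / K| / 1) - 1)
      ≤ ∫⁻ x in Q, ENNReal.ofReal (Real.exp |f x| - 1) * ENNReal.ofReal K⁻¹ := by
        refine lintegral_mono fun x => ?_
        rw [← ENNReal.ofReal_mul' (inv_nonneg.2 hK0.le), ← div_eq_mul_inv, abs_div,
          abs_of_pos hK0, div_one]
        exact ENNReal.ofReal_le_ofReal (Real.exp_div_sub_one_le hK _)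
    _ = (∫⁻ x in Q, ENNReal.ofReal (Real.exp |f x| - 1)) * ENNReal.ofReal K⁻¹ :=
        lintegral_mul_const' _ _ ENNReal.ofReal_ne_top
    _ ≤ ENNReal.ofReal K * volume Q * ENNReal.ofReal K⁻¹ := by gcongr
    _ = volume Q := by
        rw [mul_comm, ← mul_assoc, ← ENNReal.ofReal_mul (inv_nonneg.2 hK0.le),
          inv_mul_cancel₀ hK0.ne', ENNReal.ofReal_one, one_mul]

/-- If every `f` with `‖f‖_{exp L(Q)} ≤ 1` satisfies `‖f‖_{X_Q} ≤ C` (for all cubes `Q`),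
then for every `γ ∈ (0,1)` there is `C'_γ` (depending only on `γ`) such that for every
cube `Q` and nested `Ω_k ⊂ Q` with `|Ω_k| ≤ γ^k |Q|` one has
`‖Σ_k χ_{Ω_k}‖_{X_Q} ≤ C C'_γ`. -/
theorem statement3 :
    ∀ γ : ℝ, γ ∈ Set.Ioo (0 : ℝ) 1 → ∃ C' : ℝ, 0 < C' ∧
      ∀ (n : ℕ) (N : Set (Fin n → ℝ) → ((Fin n → ℝ) → ℝ) → ℝ≥0∞) (C : ℝ≥0∞),
        (∀ Q f g, (∀ x, |f x| ≤ |g x|) → N Q f ≤ N Q g) →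
        (∀ Q f (a : ℝ), N Q (fun x => a * f x) = ENNReal.ofReal |a| * N Q f) →
        (∀ Q, IsCube Q → ∀ f, Measurable f → expLNorm Q f ≤ 1 → N Q f ≤ C) →
        ∀ Q, IsCube Q →
          ∀ Ω : ℕ → Set (Fin n → ℝ), (∀ k, MeasurableSet (Ω k)) → (∀ k, Ω k ⊆ Q) →
            (∀ k, Ω (k + 1) ⊆ Ω k) →
            (∀ k, volume (Ω k) ≤ ENNReal.ofReal (γ ^ k) * volume Q) →
            N Q (fun x => ∑' k, (Ω k).indicator (fun _ => (1 : ℝ)) x)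
              ≤ C * ENNReal.ofReal C' := by
  rintro γ ⟨hγ0, hγ1⟩
  have hlog : 0 < Real.log γ⁻¹ := Real.log_pos (one_lt_inv_iff₀.2 ⟨hγ0, hγ1⟩)
  set s := Real.log γ⁻¹ / 2
  have hs : 0 < s := half_pos hlog
  have hsγ : Real.exp s * γ < 1 := by
    calc Real.exp s * γ < Real.exp (Real.log γ⁻¹) * γ := by gcongr; exact half_lt_self hlog
      _ = 1 := by rw [Real.exp_log (inv_pos.2 hγ0), inv_mul_cancel₀ hγ0.ne']
  set K := max 1 (Real.exp s / (1 - Real.exp s * γ))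
  have hK : 1 ≤ K := le_max_left _ _
  refine ⟨K / s, by positivity, ?_⟩
  intro n N C _ hhom hexpL Q hQ Ω hΩm _ hnest hvol
  set φ := fun x => ∑' k, (Ω k).indicator (fun _ => (1 : ℝ)) x
  have hφ : Measurable φ := Measurable.tsum fun k => measurable_const.indicator (hΩm k)
  have habs : ∀ x, |s * φ x| = s * φ x := fun x =>
    abs_of_nonneg (mul_nonneg hs.le (tsum_nonneg fun k => indicator_nonneg (by simp) x))
  have hint : ∫⁻ x in Q, ENNReal.ofReal (Real.exp |s * φ x| - 1) ≤ ENNReal.ofReal K * volume Q := by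
    simp only [habs]
    refine (lintegral_exp_mul_tsum_indicator_le hΩm (antitone_nat_of_succ_le hnest) hγ0.le
      hs.le hsγ fun k => (Measure.restrict_apply_le Q _).trans (hvol k)).trans ?_
    gcongr
    exact le_max_right _ _
  have hNC : N Q (fun x => s * φ x / K) ≤ C :=
    hexpL Q hQ _ ((hφ.const_mul s).div_const K) (expLNorm_div_le_one hK hint)
  have hφ_eq : φ = fun x => K / s * (s * φ x / K) := by
    ext x
    field_simp
  rw [hφ_eq, hhom, abs_of_pos (by positivity), mul_comm]
  gcongr
end
end

section
/- Let X be a q-concave Banach function space (with concavity constant 1) for some q ∈ [1,∞), and suppose M is restricted weak type bounded on X: there is C such that λ‖χ_{{Mχ_E > λ}}‖_X ≤ C‖χ_E‖_X for all measurable E and λ > 0. Let Q be a cube and 𝓕 ⊂ 𝓓(Q) a (1/2)-sparse family with generations 𝓕_k. Then with α = (1 − (2C)^{-q})^{1/q} < 1 one has ‖Σ_{P∈𝓕_k} χ_P‖_X ≤ α^k ‖χ_Q‖_X for all k, and consequently ‖Σ_{P∈𝓕} χ_P‖_X ≤ (1−α)^{-1}‖χ_Q‖_X up to the quasi-norm constant.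 -/
/-! On the layer `Ω_k = ⋃ 𝓕_k`, the set `E_k = ⋃_{P ∈ 𝓕_k} E_P` fills at least half of every
cube of `𝓕_k`, so `Ω_k ⊆ {M χ_{E_k} ≥ 1/2}` and the restricted weak type bound gives
`‖χ_{Ω_k}‖ ≤ 2C ‖χ_{E_k}‖`. As `E_k` and `Ω_{k+1}` are disjoint subsets of `Ω_k`, `q`-concavity
gives `‖χ_{E_k}‖^q + ‖χ_{Ω_{k+1}}‖^q ≤ ‖χ_{Ω_k}‖^q`, hence
`‖χ_{Ω_{k+1}}‖^q ≤ (1 - (2C)^{-q}) ‖χ_{Ω_k}‖^q`. Iterating, and summing the geometric series,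
gives both bounds. -/

open MeasureTheory Set ENNReal

noncomputable section

/-- The Hardy–Littlewood maximal operator over cubes (of an `ℝ≥0∞`-valued function). -/
def maxOp {n : ℕ} (g : (Fin n → ℝ) → ℝ≥0∞) (x : Fin n → ℝ) : ℝ≥0∞ :=
  ⨆ (Q : Set (Fin n → ℝ)) (_ : IsCube Q) (_ : x ∈ Q), (volume Q)⁻¹ * ∫⁻ y in Q, g y

local notation "χ[" s "]" => Set.indicator s fun _ => (1 : ℝ)

section FunctionNorm

variable {α : Type*} {NX : (α → ℝ) → ℝ≥0∞}

theorem apply_indicator_one_mono (hmono : ∀ f g, (∀ x, |f x| ≤ |g x|) → NX f ≤ NX g)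
    {s t : Set α} (hst : s ⊆ t) : NX χ[s] ≤ NX χ[t] :=
  hmono _ _ fun x => by
    rw [abs_of_nonneg (indicator_nonneg (fun _ _ => zero_le_one) x),
      abs_of_nonneg (indicator_nonneg (fun _ _ => zero_le_one) x)]
    exact indicator_le_indicator_of_subset hst (fun _ => zero_le_one) x

theorem rpow_add_rpow_le_of_disjoint (hmono : ∀ f g, (∀ x, |f x| ≤ |g x|) → NX f ≤ NX g)
    {q : ℝ} (hq : 0 < q)
    (hconc : ∀ (m : ℕ) (f : Fin m → α → ℝ),
      (∑ i, NX (f i) ^ q) ^ (1 / q) ≤ NX (fun x => (∑ i, |f i x| ^ q) ^ (1 / q)))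
    {s t u : Set α} (hst : Disjoint s t) (hsu : s ⊆ u) (htu : t ⊆ u) :
    NX χ[s] ^ q + NX χ[t] ^ q ≤ NX χ[u] ^ q := by
  have hpt : (fun x => (|χ[s] x| ^ q + |χ[t] x| ^ q) ^ (1 / q)) = χ[s ∪ t] := by
    funext x
    by_cases hs : x ∈ s
    · have ht : x ∉ t := hst.notMem_of_mem_left hs
      simp [hs, ht, hq.ne']
    · by_cases ht : x ∈ t <;> simp [hs, ht, hq.ne']
  have hc := hconc 2 ![χ[s], χ[t]]
  simp only [Fin.sum_univ_two, Matrix.cons_val_zero, Matrix.cons_val_one, hpt] at hc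
  rw [one_div, ENNReal.rpow_inv_le_iff hq] at hc
  exact hc.trans <|
    ENNReal.rpow_le_rpow (apply_indicator_one_mono hmono (union_subset hsu htu)) hq.le

end FunctionNorm

theorem ENNReal.le_mul_of_rpow_add_rpow_le {A B D : ℝ≥0∞} {c q : ℝ} (hc : 1 < c) (hq : 0 < q)
    (hsum : A ^ q + B ^ q ≤ D ^ q) (hDA : D ≤ ENNReal.ofReal c * A) :
    B ≤ ENNReal.ofReal ((1 - c ^ (-q)) ^ (1 / q)) * D := by
  have hβ : 0 < c ^ (-q) := Real.rpow_pos_of_pos (by linarith) _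
  have hβ1 : c ^ (-q) < 1 := Real.rpow_lt_one_of_one_lt_of_neg hc (by linarith)
  rcases eq_or_ne D ⊤ with rfl | hD
  · rw [ENNReal.mul_top (by simpa using Real.rpow_pos_of_pos (by linarith) _)]
    exact le_top
  have hA : A ^ q ≠ ⊤ := ne_top_of_le_ne_top (ENNReal.rpow_ne_top_of_nonneg hq.le hD)
    (le_self_add.trans hsum)
  have hAD : ENNReal.ofReal (c ^ (-q)) * D ^ q ≤ A ^ q := by
    calc ENNReal.ofReal (c ^ (-q)) * D ^ q
        ≤ ENNReal.ofReal (c ^ (-q)) * (ENNReal.ofReal c ^ q * A ^ q) := by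
          gcongr
          rw [← ENNReal.mul_rpow_of_nonneg _ _ hq.le]
          exact ENNReal.rpow_le_rpow hDA hq.le
      _ = A ^ q := by
          rw [← mul_assoc, ENNReal.ofReal_rpow_of_pos (by linarith), ← ENNReal.ofReal_mul hβ.le,
            ← Real.rpow_add (by linarith), neg_add_cancel, Real.rpow_zero, ENNReal.ofReal_one,
            one_mul]
  have hB : B ^ q ≤ ENNReal.ofReal (1 - c ^ (-q)) * D ^ q := by
    calc B ^ q ≤ D ^ q - A ^ q := ENNReal.le_sub_of_add_le_left hA hsum
      _ ≤ D ^ q - ENNReal.ofReal (c ^ (-q)) * D ^ q := tsub_le_tsub_left hAD _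
      _ = ENNReal.ofReal (1 - c ^ (-q)) * D ^ q := by
          rw [ENNReal.ofReal_sub _ hβ.le, ENNReal.ofReal_one,
            ENNReal.sub_mul fun _ _ => ENNReal.rpow_ne_top_of_nonneg hq.le hD, one_mul]
  rw [← ENNReal.rpow_le_rpow_iff hq, ENNReal.mul_rpow_of_nonneg _ _ hq.le,
    ENNReal.ofReal_rpow_of_pos (Real.rpow_pos_of_pos (by linarith) _), one_div,
    Real.rpow_inv_rpow (by linarith) hq.ne']
  exact hB

theorem ENNReal.le_pow_mul_of_le_mul {u : ℕ → ℝ≥0∞} {a : ℝ≥0∞} (h : ∀ k, u (k + 1) ≤ a * u k)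
    (k : ℕ) : u k ≤ a ^ k * u 0 := by
  induction k with
  | zero => simp
  | succ k ih =>
    calc u (k + 1) ≤ a * (a ^ k * u 0) := (h k).trans (mul_le_mul_right ih a)
      _ = a ^ (k + 1) * u 0 := by ring

section MaximalFunction

variable {n : ℕ}

theorem IsCube.measure_ne_zero {P : Set (Fin n → ℝ)} (hP : IsCube P) : volume P ≠ 0 := by
  obtain ⟨a, r, hr, rfl⟩ := hP
  simp [Real.volume_Icc_pi, hr]

theorem IsCube.measure_ne_top {P : Set (Fin n → ℝ)} (hP : IsCube P) : volume P ≠ ⊤ := by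
  obtain ⟨a, r, -, rfl⟩ := hP
  exact isCompact_Icc.measure_lt_top.ne

theorem inv_two_le_maxOp_indicator {P F : Set (Fin n → ℝ)} (hP : IsCube P)
    (hF : MeasurableSet F) (hPF : volume P ≤ 2 * volume (F ∩ P)) {x : Fin n → ℝ} (hx : x ∈ P) :
    2⁻¹ ≤ maxOp (F.indicator fun _ => 1) x := by
  have hmean :
      (volume P)⁻¹ * ∫⁻ y in P, F.indicator (fun _ => 1) y = volume (F ∩ P) / volume P := by
    rw [lintegral_indicator hF, setLIntegral_one, Measure.restrict_apply hF,
      ENNReal.div_eq_inv_mul]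
  refine le_iSup_of_le P (le_iSup_of_le hP (le_iSup_of_le hx ?_))
  rw [hmean, ENNReal.le_div_iff_mul_le (Or.inl hP.measure_ne_zero) (Or.inl hP.measure_ne_top),
    ← ENNReal.div_eq_inv_mul]
  exact ENNReal.div_le_of_le_mul' hPF

theorem apply_indicator_one_le_of_inv_two_le_maxOp {NX : ((Fin n → ℝ) → ℝ) → ℝ≥0∞}
    (hmono : ∀ f g, (∀ x, |f x| ≤ |g x|) → NX f ≤ NX g) {C : ℝ}
    (hweak : ∀ E : Set (Fin n → ℝ), MeasurableSet E → ∀ l : ℝ, 0 < l →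
      ENNReal.ofReal l *
          NX ({x | ENNReal.ofReal l < maxOp (E.indicator fun _ => (1 : ℝ≥0∞)) x}.indicator
            fun _ => (1 : ℝ))
        ≤ ENNReal.ofReal C * NX (E.indicator fun _ => (1 : ℝ)))
    {E Ω : Set (Fin n → ℝ)} (hE : MeasurableSet E)
    (hΩ : ∀ x ∈ Ω, 2⁻¹ ≤ maxOp (E.indicator fun _ => 1) x) :
    NX χ[Ω] ≤ ENNReal.ofReal (2 * C) * NX χ[E] := by
  -- every level `l < 1/2` of `M χ_E` contains `Ω`; let `l = a / 2` with `a < 1`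
  refine ENNReal.le_of_forall_lt_one_mul_le fun a ha => ?_
  rcases eq_or_ne a 0 with rfl | ha0
  · simp
  have ha2 : a / 2 ≠ ⊤ := ENNReal.div_ne_top (ha.trans one_lt_top).ne two_ne_zero
  have hl : ENNReal.ofReal (a / 2).toReal = a / 2 := ENNReal.ofReal_toReal ha2
  have hlevel : Ω ⊆ {x | ENNReal.ofReal (a / 2).toReal < maxOp (E.indicator fun _ => 1) x} :=
    fun x hx => by
      rw [mem_ofPred_eq, hl]
      refine lt_of_lt_of_le (ENNReal.div_lt_of_lt_mul ?_) (hΩ x hx)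
      rwa [ENNReal.inv_mul_cancel two_ne_zero ofNat_ne_top]
  have hl0 : 0 < (a / 2).toReal := ENNReal.toReal_pos (by simpa using ha0) ha2
  calc a * NX χ[Ω] = 2 * (ENNReal.ofReal (a / 2).toReal * NX χ[Ω]) := by
        rw [hl, ← mul_assoc, ENNReal.mul_div_cancel two_ne_zero ofNat_ne_top]
    _ ≤ 2 * (ENNReal.ofReal C * NX χ[E]) := by
        gcongr 2 * ?_
        exact (mul_le_mul_right (apply_indicator_one_mono hmono hlevel) _).trans
          (hweak E hE _ hl0)
    _ = ENNReal.ofReal (2 * C) * NX χ[E] := by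
        rw [ENNReal.ofReal_mul zero_le_two, ENNReal.ofReal_ofNat, mul_assoc]

theorem apply_indicator_one_le_mul_of_sparse_layer {NX : ((Fin n → ℝ) → ℝ) → ℝ≥0∞}
    (hmono : ∀ f g, (∀ x, |f x| ≤ |g x|) → NX f ≤ NX g) {q : ℝ} (hq : 0 < q)
    (hconc : ∀ (m : ℕ) (f : Fin m → (Fin n → ℝ) → ℝ),
      (∑ i, NX (f i) ^ q) ^ (1 / q) ≤ NX (fun x => (∑ i, |f i x| ^ q) ^ (1 / q)))
    {C : ℝ} (hC : 1 ≤ C)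
    (hweak : ∀ E : Set (Fin n → ℝ), MeasurableSet E → ∀ l : ℝ, 0 < l →
      ENNReal.ofReal l *
          NX ({x | ENNReal.ofReal l < maxOp (E.indicator fun _ => (1 : ℝ≥0∞)) x}.indicator
            fun _ => (1 : ℝ))
        ≤ ENNReal.ofReal C * NX (E.indicator fun _ => (1 : ℝ)))
    {E Ω Ω' : Set (Fin n → ℝ)} (hE : MeasurableSet E) (hEΩ : E ⊆ Ω) (hΩ' : Ω' ⊆ Ω)
    (hEΩ' : Disjoint E Ω') (hΩ : ∀ x ∈ Ω, 2⁻¹ ≤ maxOp (E.indicator fun _ => 1) x) :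
    NX χ[Ω'] ≤ ENNReal.ofReal ((1 - (2 * C) ^ (-q)) ^ (1 / q)) * NX χ[Ω] :=
  ENNReal.le_mul_of_rpow_add_rpow_le (by linarith) hq
    (rpow_add_rpow_le_of_disjoint hmono hq hconc hEΩ' hEΩ hΩ')
    (apply_indicator_one_le_of_inv_two_le_maxOp hmono hweak hE hΩ)

end MaximalFunction

theorem statement10_general {n : ℕ}
    (NX : ((Fin n → ℝ) → ℝ) → ℝ≥0∞)
    (hmono : ∀ f g, (∀ x, |f x| ≤ |g x|) → NX f ≤ NX g)
    (hsubadd : ∀ f : ℕ → (Fin n → ℝ) → ℝ, (∀ k x, 0 ≤ f k x) →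
      NX (fun x => ∑' k, f k x) ≤ ∑' k, NX (f k))
    (q : ℝ) (hq : 1 ≤ q)
    (hconc : ∀ (m : ℕ) (f : Fin m → (Fin n → ℝ) → ℝ),
      (∑ i, NX (f i) ^ q) ^ (1 / q) ≤ NX (fun x => (∑ i, |f i x| ^ q) ^ (1 / q)))
    (C : ℝ) (hC : 1 ≤ C)
    (hweak : ∀ E : Set (Fin n → ℝ), MeasurableSet E → ∀ l : ℝ, 0 < l →
      ENNReal.ofReal l *
          NX ({x | ENNReal.ofReal l < maxOp (E.indicator fun _ => (1 : ℝ≥0∞)) x}.indicator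
            fun _ => (1 : ℝ))
        ≤ ENNReal.ofReal C * NX (E.indicator fun _ => (1 : ℝ)))
    (Q : Set (Fin n → ℝ))
    (P E : ℕ → ℕ → Set (Fin n → ℝ))
    (hPcube : ∀ k i, IsCube (P k i) ∨ P k i = ∅)
    (hPQ : ∀ k i, P k i ⊆ Q)
    (hgen_disj : ∀ k, Pairwise fun i j => Disjoint (P k i) (P k j))
    (hnest : ∀ k, (⋃ i, P (k + 1) i) ⊆ ⋃ i, P k i)
    (hEsub : ∀ k i, E k i ⊆ P k i)
    (hEmeas : ∀ k i, MeasurableSet (E k i))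
    (hEdisj : ∀ k i, Disjoint (E k i) (⋃ j, P (k + 1) j))
    (hsparse : ∀ k i, volume (P k i) ≤ 2 * volume (E k i)) :
    (∀ k, NX (fun x => ∑' i, (P k i).indicator (fun _ => (1 : ℝ)) x)
        ≤ ENNReal.ofReal ((1 - (2 * C) ^ (-q)) ^ (1 / q)) ^ k
            * NX (Q.indicator fun _ => (1 : ℝ))) ∧
      NX (fun x => ∑' (k : ℕ) (i : ℕ), (P k i).indicator (fun _ => (1 : ℝ)) x)
        ≤ (1 - ENNReal.ofReal ((1 - (2 * C) ^ (-q)) ^ (1 / q)))⁻¹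
            * NX (Q.indicator fun _ => (1 : ℝ)) := by
  set α := ENNReal.ofReal ((1 - (2 * C) ^ (-q)) ^ (1 / q))
  set Ω : ℕ → Set (Fin n → ℝ) := fun k => ⋃ i, P k i
  have hgen : ∀ k, (fun x => ∑' i, (P k i).indicator (fun _ => (1 : ℝ)) x) = χ[Ω k] :=
    fun k => (indicator_iUnion_of_pairwise_disjoint _ (hgen_disj k) _).symm
  have hhalf : ∀ k, ∀ x ∈ Ω k, 2⁻¹ ≤ maxOp ((⋃ i, E k i).indicator fun _ => 1) x := by
    intro k x hx
    obtain ⟨i, hxi⟩ := mem_iUnion.1 hx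
    have hcube : IsCube (P k i) := (hPcube k i).resolve_right (nonempty_of_mem hxi).ne_empty
    refine inv_two_le_maxOp_indicator hcube (.iUnion (hEmeas k)) ?_ hxi
    exact (hsparse k i).trans
      (mul_le_mul_right (measure_mono (subset_inter (subset_iUnion _ i) (hEsub k i))) 2)
  have hstep : ∀ k, NX χ[Ω (k + 1)] ≤ α * NX χ[Ω k] := fun k =>
    apply_indicator_one_le_mul_of_sparse_layer hmono (by linarith) hconc hC hweak
      (.iUnion (hEmeas k)) (iUnion_mono (hEsub k)) (hnest k) (disjoint_iUnion_left.2 (hEdisj k))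
      (hhalf k)
  have hlayer : ∀ k, NX χ[Ω k] ≤ α ^ k * NX χ[Q] := fun k =>
    (ENNReal.le_pow_mul_of_le_mul hstep k).trans
      (mul_le_mul_right (apply_indicator_one_mono hmono (iUnion_subset (hPQ 0))) _)
  refine ⟨fun k => hgen k ▸ hlayer k, ?_⟩
  calc NX (fun x => ∑' (k : ℕ) (i : ℕ), (P k i).indicator (fun _ => (1 : ℝ)) x)
      ≤ ∑' k, NX χ[Ω k] := by
        simpa only [← hgen] using hsubadd _ fun k x => tsum_nonneg fun i =>
          indicator_nonneg (fun _ _ => zero_le_one) x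
    _ ≤ ∑' k, α ^ k * NX χ[Q] := ENNReal.tsum_le_tsum hlayer
    _ = (1 - α)⁻¹ * NX χ[Q] := by rw [ENNReal.tsum_mul_right, ENNReal.tsum_geometric]

/-- Let `X` be a `q`-concave Banach function space (constant 1) on which `M` is restricted
weak type bounded with constant `C ≥ 1`. Then for a `(1/2)`-sparse family in a cube `Q`,
organized by generations `𝓕_k = {P k i}_i` (with `E_{P} ⊆ P`, `|P| ≤ 2|E_P|`, `E_P`
disjoint from the next generation), one has, with `α = (1-(2C)^{-q})^{1/q} < 1`,
`‖Σ_{P ∈ 𝓕_k} χ_P‖_X ≤ α^k ‖χ_Q‖_X` and `‖Σ_{P ∈ 𝓕} χ_P‖_X ≤ (1-α)⁻¹ ‖χ_Q‖_X`. -/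
theorem statement10 {n : ℕ}
    (NX : ((Fin n → ℝ) → ℝ) → ℝ≥0∞)
    (hmono : ∀ f g, (∀ x, |f x| ≤ |g x|) → NX f ≤ NX g)
    (hsubadd : ∀ f : ℕ → (Fin n → ℝ) → ℝ, (∀ k x, 0 ≤ f k x) →
      NX (fun x => ∑' k, f k x) ≤ ∑' k, NX (f k))
    (q : ℝ) (hq : 1 ≤ q)
    (hconc : ∀ (m : ℕ) (f : Fin m → (Fin n → ℝ) → ℝ),
      (∑ i, NX (f i) ^ q) ^ (1 / q) ≤ NX (fun x => (∑ i, |f i x| ^ q) ^ (1 / q)))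
    (C : ℝ) (hC : 1 ≤ C)
    (hweak : ∀ E : Set (Fin n → ℝ), MeasurableSet E → ∀ l : ℝ, 0 < l →
      ENNReal.ofReal l *
          NX ({x | ENNReal.ofReal l < maxOp (E.indicator fun _ => (1 : ℝ≥0∞)) x}.indicator
            fun _ => (1 : ℝ))
        ≤ ENNReal.ofReal C * NX (E.indicator fun _ => (1 : ℝ)))
    (Q : Set (Fin n → ℝ)) (hQ : IsCube Q)
    (P E : ℕ → ℕ → Set (Fin n → ℝ))
    (hPcube : ∀ k i, IsCube (P k i) ∨ P k i = ∅)
    (hPQ : ∀ k i, P k i ⊆ Q)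
    (hgen_disj : ∀ k, Pairwise fun i j => Disjoint (P k i) (P k j))
    (hnest : ∀ k, (⋃ i, P (k + 1) i) ⊆ ⋃ i, P k i)
    (hEsub : ∀ k i, E k i ⊆ P k i)
    (hEmeas : ∀ k i, MeasurableSet (E k i))
    (hEdisj : ∀ k i, Disjoint (E k i) (⋃ j, P (k + 1) j))
    (hsparse : ∀ k i, volume (P k i) ≤ 2 * volume (E k i)) :
    (∀ k, NX (fun x => ∑' i, (P k i).indicator (fun _ => (1 : ℝ)) x)
        ≤ ENNReal.ofReal ((1 - (2 * C) ^ (-q)) ^ (1 / q)) ^ k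
            * NX (Q.indicator fun _ => (1 : ℝ))) ∧
      NX (fun x => ∑' (k : ℕ) (i : ℕ), (P k i).indicator (fun _ => (1 : ℝ)) x)
        ≤ (1 - ENNReal.ofReal ((1 - (2 * C) ^ (-q)) ^ (1 / q)))⁻¹
            * NX (Q.indicator fun _ => (1 : ℝ)) :=
  statement10_general NX hmono hsubadd q hq hconc C hC hweak Q P E hPcube hPQ hgen_disj hnest hEsub
    hEmeas hEdisj hsparse
end
end

section
/- Let w(x) = e^x on ℝ and f(x) = x. Then for every interval I = (a,b) with b − a > 1, one has inf_c (1/w(I)) ∫_I |x − c| e^x dx ≤ C for an absolute constant C; in fact ∫_a^b (b−x) e^x dx = e^b ∫_0^{b−a} y e^{−y} dy ≤ e^b and w(I) = e^b − e^a ≥ (1 − e^{−1}) e^b. Combined with the Lipschitz bound on short intervals, f ∈ BMO*_{L¹(w)} while f ∉ BMO. -/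
open MeasureTheory Set

noncomputable section

/-! Take `c = b`: on `[a, b]` the oscillation `|x - b|` is `b - x`, and the substitution `y = b - x`
reduces the integral to `e^b ∫_0^{b-a} y e^{-y} dy`, whose explicit antiderivative shows it is at
most `e^b`. -/

namespace Real

theorem integral_mul_exp_neg (t : ℝ) :
    ∫ y in (0 : ℝ)..t, y * exp (-y) = 1 - (t + 1) * exp (-t) := by
  have hderiv : ∀ y ∈ uIcc (0 : ℝ) t,
      HasDerivAt (fun y => -((y + 1) * exp (-y))) (y * exp (-y)) y := by
    intro y _
    have hexp : HasDerivAt (fun y : ℝ => exp (-y)) (-exp (-y)) y := by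
      simpa using (hasDerivAt_neg y).exp
    refine (((hasDerivAt_id y).add_const 1).fun_mul hexp).fun_neg.congr_deriv ?_
    simp only [id]
    ring
  rw [intervalIntegral.integral_eq_sub_of_hasDerivAt hderiv
    (Continuous.intervalIntegrable (by fun_prop) _ _)]
  simp only [zero_add, one_mul, neg_zero, exp_zero]
  ring

theorem integral_mul_exp_neg_le_one {t : ℝ} (ht : -1 ≤ t) :
    ∫ y in (0 : ℝ)..t, y * exp (-y) ≤ 1 := by
  rw [integral_mul_exp_neg]
  have : 0 ≤ (t + 1) * exp (-t) := mul_nonneg (by linarith) (exp_pos _).le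
  linarith

theorem integral_sub_mul_exp (a b : ℝ) :
    ∫ x in a..b, (b - x) * exp x = exp b * ∫ y in (0 : ℝ)..(b - a), y * exp (-y) := by
  have hsub : ∀ x, (b - x) * exp x = exp b * ((b - x) * exp (-(b - x))) := by
    intro x
    rw [mul_left_comm, ← exp_add]
    ring_nf
  simp_rw [hsub, intervalIntegral.integral_const_mul,
    intervalIntegral.integral_comp_sub_left (fun y => y * exp (-y)), sub_self]

theorem one_sub_exp_neg_one_mul_le {a b : ℝ} (hab : 1 ≤ b - a) :
    (1 - exp (-1)) * exp b ≤ exp b - exp a := by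
  have : exp a ≤ exp (-1) * exp b := by
    rw [← exp_add, exp_le_exp]
    linarith
  linarith

theorem integral_abs_sub_right_mul_exp {a b : ℝ} (hab : a ≤ b) :
    ∫ x in a..b, |x - b| * exp x = ∫ x in a..b, (b - x) * exp x := by
  refine intervalIntegral.integral_congr fun x hx => ?_
  rw [uIcc_of_le hab] at hx
  simp only [abs_of_nonpos (sub_nonpos.mpr hx.2), neg_sub]

end Real

open Real in
/-- For `w(x) = e^x` and `f(x) = x` on an interval `I = (a,b)` with `b - a > 1`:
`∫_a^b (b-x)e^x dx = e^b ∫_0^{b-a} y e^{-y} dy ≤ e^b`, `e^b - e^a ≥ (1-e^{-1})e^b`,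
and hence `inf_c (1/w(I)) ∫_I |x-c| e^x dx ≤ (1-e^{-1})^{-1}`. -/
theorem statement12 (a b : ℝ) (hab : 1 < b - a) :
    (∫ x in a..b, (b - x) * Real.exp x)
        = Real.exp b * ∫ y in (0 : ℝ)..(b - a), y * Real.exp (-y) ∧
      (∫ x in a..b, (b - x) * Real.exp x) ≤ Real.exp b ∧
      (1 - Real.exp (-1)) * Real.exp b ≤ Real.exp b - Real.exp a ∧
      ∃ c : ℝ, (∫ x in a..b, |x - c| * Real.exp x)
        ≤ (1 - Real.exp (-1))⁻¹ * (Real.exp b - Real.exp a) := by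
  have hbound : ∫ x in a..b, (b - x) * exp x ≤ exp b := by
    rw [integral_sub_mul_exp]
    simpa using mul_le_mul_of_nonneg_left
      (integral_mul_exp_neg_le_one (t := b - a) (by linarith)) (exp_pos b).le
  have hweight := one_sub_exp_neg_one_mul_le hab.le
  refine ⟨integral_sub_mul_exp a b, hbound, hweight, b, ?_⟩
  have hpos : 0 < 1 - exp (-1) := sub_pos.mpr (exp_lt_one_iff.mpr (by norm_num))
  rw [integral_abs_sub_right_mul_exp (by linarith), le_inv_mul_iff₀ hpos]
  calc (1 - exp (-1)) * ∫ x in a..b, (b - x) * exp x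
      ≤ (1 - exp (-1)) * exp b := mul_le_mul_of_nonneg_left hbound hpos.le
    _ ≤ exp b - exp a := hweight
end
end

section
/- Let p : ℝ → [1, ∞) be defined by p(x) = 1 + Σ_{k=1}^∞ φ(x − k), where φ is a smooth bump with 0 ≤ φ ≤ 1, supported in [−ρε/2, ρε/2], and φ = 1 on [−ε/2, ε/2], with 0 < ε < ρε < 1. For m ∈ ℕ let I = [ε/2, m + ε/2] and E = ⋃_{k=1}^m [k − ε/2, k + ε/2]. Then |E| = ε|I| = εm, ‖χ_E‖_{L^{p(·)}} = (εm)^{1/2}, and ‖χ_I‖_{L^{p(·)}} ≥ (1 − ρε)m. Consequently ‖χ_E‖_{L^{p(·)}}/‖χ_I‖_{L^{p(·)}} → 0 as m → ∞, so L^{p(·)} fails the A_ε-condition. -/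
open MeasureTheory Set ENNReal Filter

noncomputable section

/-- Luxemburg norm of a variable exponent Lebesgue space `L^{p(·)}` on `ℝ`. -/
def luxNorm (p : ℝ → ℝ) (f : ℝ → ℝ) : ℝ :=
  sInf {l : ℝ | 0 < l ∧ ∫⁻ x, (ENNReal.ofReal (|f x| / l)) ^ (p x) ≤ 1}

lemma aux_p1 (φ : ℝ → ℝ) (hφ01 : ∀ x, φ x ∈ Set.Icc (0 : ℝ) 1)
    (p : ℝ → ℝ) (hp : ∀ x, p x = 1 + ∑' k : ℕ, φ (x - (k + 1))) (x : ℝ) : 1 ≤ p x := by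
  rw [hp]
  have : 0 ≤ ∑' k : ℕ, φ (x - (k + 1)) := tsum_nonneg fun k => (hφ01 _).1
  linarith

lemma aux_pE (ε ρ : ℝ) (hε : 0 < ε) (hρ : 1 < ρ) (hρε : ρ * ε < 1)
    (φ : ℝ → ℝ)
    (hφsupp : ∀ x, x ∉ Set.Icc (-(ρ * ε) / 2) (ρ * ε / 2) → φ x = 0)
    (hφone : ∀ x ∈ Set.Icc (-(ε / 2)) (ε / 2), φ x = 1)
    (p : ℝ → ℝ) (hp : ∀ x, p x = 1 + ∑' k : ℕ, φ (x - (k + 1)))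
    (k₀ : ℕ) (hk₀ : 1 ≤ k₀) (x : ℝ)
    (hx : x ∈ Set.Icc ((k₀ : ℝ) - ε / 2) ((k₀ : ℝ) + ε / 2)) : p x = 2 := by
  obtain ⟨hx1, hx2⟩ := hx
  have hεr : ε < ρ * ε := lt_mul_of_one_lt_left hε hρ
  rw [hp]
  have h1 : ∑' k : ℕ, φ (x - (k + 1)) = 1 := by
    rw [tsum_eq_single (k₀ - 1) ?_]
    · have hc : ((k₀ - 1 : ℕ) : ℝ) + 1 = k₀ := by
        have h := Nat.succ_pred_eq_of_pos hk₀
        exact_mod_cast congrArg (fun n : ℕ => (n : ℝ)) h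
      rw [hc]
      apply hφone
      simp only [Set.mem_Icc]; constructor <;> linarith
    · intro j hj
      apply hφsupp
      intro hmem
      obtain ⟨h1, h2⟩ := hmem
      rcases lt_or_gt_of_ne (fun h : j + 1 = k₀ => hj (by omega)) with hlt | hgt
      · have : (j : ℝ) + 2 ≤ k₀ := by exact_mod_cast (by omega : j + 2 ≤ k₀)
        linarith
      · have : (k₀ : ℝ) + 1 ≤ (j : ℝ) + 1 := by exact_mod_cast (by omega : k₀ + 1 ≤ j + 1)
        linarith
  rw [h1]; norm_num

lemma aux_pF (ε ρ : ℝ) (hε : 0 < ε) (hρ : 1 < ρ) (hρε : ρ * ε < 1)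
    (φ : ℝ → ℝ)
    (hφsupp : ∀ x, x ∉ Set.Icc (-(ρ * ε) / 2) (ρ * ε / 2) → φ x = 0)
    (p : ℝ → ℝ) (hp : ∀ x, p x = 1 + ∑' k : ℕ, φ (x - (k + 1)))
    (m : ℕ) (x : ℝ) (hxI : x ∈ Set.Icc (ε / 2) ((m : ℝ) + ε / 2))
    (hxU : ∀ k ∈ Finset.Icc 1 m, x ∉ Set.Icc ((k : ℝ) - ρ * ε / 2) ((k : ℝ) + ρ * ε / 2)) :
    p x = 1 := by
  obtain ⟨hx1, hx2⟩ := hxI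
  have hεr : ε < ρ * ε := lt_mul_of_one_lt_left hε hρ
  rw [hp]
  have h1 : ∑' k : ℕ, φ (x - (k + 1)) = 0 := by
    have hz : ∀ k : ℕ, φ (x - (k + 1)) = 0 := by
      intro j
      by_cases hjm : j + 1 ≤ m
      · have := hxU (j + 1) (Finset.mem_Icc.mpr ⟨by omega, hjm⟩)
        apply hφsupp
        intro ⟨h1, h2⟩
        apply this
        push_cast
        constructor <;> linarith
      · apply hφsupp
        intro ⟨h1, h2⟩
        have : (m : ℝ) ≤ (j : ℝ) := by exact_mod_cast (by omega : m ≤ j)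
        linarith
    simp only [hz, tsum_zero]
  rw [h1]; norm_num

lemma aux_volE (ε : ℝ) (hε : 0 < ε) (hε1 : ε < 1) (m : ℕ) :
    volume (⋃ k ∈ Finset.Icc 1 m, Set.Icc ((k : ℝ) - ε / 2) ((k : ℝ) + ε / 2))
      = ENNReal.ofReal (ε * m) := by
  rw [measure_biUnion_finset ?_ (fun k _ => measurableSet_Icc)]
  · have : ∀ k ∈ Finset.Icc 1 m,
        volume (Set.Icc ((k : ℝ) - ε / 2) ((k : ℝ) + ε / 2)) = ENNReal.ofReal ε := by
      intro k _
      rw [Real.volume_Icc]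
      ring_nf
    rw [Finset.sum_congr rfl this, Finset.sum_const, Nat.card_Icc]
    simp only [Nat.add_sub_cancel, nsmul_eq_mul]
    rw [← ENNReal.ofReal_natCast, ← ENNReal.ofReal_mul (by positivity), mul_comm]
  · intro i hi j hj hij
    apply Set.disjoint_left.mpr
    rintro x ⟨h1, h2⟩ ⟨h3, h4⟩
    rcases lt_or_gt_of_ne hij with hlt | hgt
    · have : (i : ℝ) + 1 ≤ j := by exact_mod_cast hlt
      linarith
    · have : (j : ℝ) + 1 ≤ i := by exact_mod_cast hgt
      linarith

lemma aux_luxE (p : ℝ → ℝ) (hp1 : ∀ x, 1 ≤ p x) (m : ℕ) (hm : 0 < m) (ε : ℝ) (hε : 0 < ε)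
    (E : Set ℝ) (hEmeas : MeasurableSet E) (hvol : volume E = ENNReal.ofReal (ε * m))
    (hpE : ∀ x ∈ E, p x = 2) :
    luxNorm p (E.indicator fun _ => (1 : ℝ)) = Real.sqrt (ε * m) := by
  have hεm : 0 < ε * m := by positivity
  have hsq : 0 < Real.sqrt (ε * m) := Real.sqrt_pos.mpr hεm
  have hint : ∀ l : ℝ, 0 < l →
      (∫⁻ x, (ENNReal.ofReal (|(E.indicator fun _ => (1:ℝ)) x| / l)) ^ (p x))
        = ENNReal.ofReal (ε * m / l ^ 2) := by
    intro l hl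
    have hfun : (fun x => (ENNReal.ofReal (|(E.indicator fun _ => (1:ℝ)) x| / l)) ^ (p x))
        = E.indicator (fun _ => ENNReal.ofReal (1 / l) ^ (2 : ℝ)) := by
      funext x
      by_cases hx : x ∈ E
      · simp only [Set.indicator_of_mem hx, hpE x hx]
        norm_num
      · simp only [Set.indicator_of_notMem hx]
        simp only [abs_zero, zero_div, ENNReal.ofReal_zero]
        exact ENNReal.zero_rpow_of_pos (lt_of_lt_of_le one_pos (hp1 x))
    rw [hfun, lintegral_indicator_const hEmeas, hvol,
      ENNReal.ofReal_rpow_of_pos (by positivity), ← ENNReal.ofReal_mul (by positivity)]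
    congr 1
    rw [show ((1:ℝ)/l) ^ (2:ℝ) = (1/l)^(2:ℕ) from Real.rpow_natCast _ 2]
    field_simp
  have hset : {l : ℝ | 0 < l ∧
      (∫⁻ x, (ENNReal.ofReal (|(E.indicator fun _ => (1:ℝ)) x| / l)) ^ (p x)) ≤ 1}
      = Set.Ici (Real.sqrt (ε * m)) := by
    ext l
    simp only [Set.mem_setOf_eq, Set.mem_Ici]
    constructor
    · rintro ⟨hl, hle⟩
      rw [hint l hl, ← ENNReal.ofReal_one, ENNReal.ofReal_le_ofReal_iff one_pos.le] at hle
      rw [div_le_one (by positivity)] at hle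
      calc Real.sqrt (ε * m) ≤ Real.sqrt (l ^ 2) := Real.sqrt_le_sqrt hle
        _ = l := by rw [Real.sqrt_sq hl.le]
    · intro hl
      have hl0 : 0 < l := lt_of_lt_of_le hsq hl
      refine ⟨hl0, ?_⟩
      rw [hint l hl0, ← ENNReal.ofReal_one]
      apply ENNReal.ofReal_le_ofReal
      rw [div_le_one (by positivity)]
      calc ε * m = Real.sqrt (ε * m) ^ 2 := (Real.sq_sqrt hεm.le).symm
        _ ≤ l ^ 2 := by nlinarith [Real.sqrt_nonneg (ε * m)]
  rw [luxNorm, hset, csInf_Ici]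

lemma aux_luxI (ε ρ : ℝ) (hε : 0 < ε) (hρ : 1 < ρ) (hρε : ρ * ε < 1)
    (p : ℝ → ℝ) (hp1 : ∀ x, 1 ≤ p x) (m : ℕ) (hm : 0 < m)
    (hpF : ∀ x ∈ Set.Icc (ε / 2) ((m : ℝ) + ε / 2) \
        ⋃ k ∈ Finset.Icc 1 m, Set.Icc ((k : ℝ) - ρ * ε / 2) ((k : ℝ) + ρ * ε / 2), p x = 1) :
    (1 - ρ * ε) * m
      ≤ luxNorm p ((Set.Icc (ε / 2) ((m : ℝ) + ε / 2)).indicator fun _ => (1 : ℝ)) := by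
  have hm1 : (1 : ℝ) ≤ m := by exact_mod_cast hm
  set I : Set ℝ := Set.Icc (ε / 2) ((m : ℝ) + ε / 2) with hI
  set U : Set ℝ := ⋃ k ∈ Finset.Icc 1 m, Set.Icc ((k : ℝ) - ρ * ε / 2) ((k : ℝ) + ρ * ε / 2)
    with hU
  set F : Set ℝ := I \ U with hF
  have hvolI : volume I = ENNReal.ofReal m := by
    rw [hI, Real.volume_Icc]; ring_nf
  have hmem : (m : ℝ) ∈ {l : ℝ | 0 < l ∧
      (∫⁻ x, (ENNReal.ofReal (|(I.indicator fun _ => (1:ℝ)) x| / l)) ^ (p x)) ≤ 1} := by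
    refine ⟨by positivity, ?_⟩
    have hpt : (fun x => (ENNReal.ofReal (|(I.indicator fun _ => (1:ℝ)) x| / m)) ^ (p x))
        ≤ I.indicator (fun _ => ENNReal.ofReal (1 / m)) := by
      intro x
      by_cases hx : x ∈ I
      · simp only [Set.indicator_of_mem hx]
        simp only [abs_one]
        calc ENNReal.ofReal (1 / (m:ℝ)) ^ (p x)
            ≤ ENNReal.ofReal (1 / (m:ℝ)) ^ (1:ℝ) := by
              apply ENNReal.rpow_le_rpow_of_exponent_ge ?_ (hp1 x)
              rw [← ENNReal.ofReal_one]
              apply ENNReal.ofReal_le_ofReal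
              rw [div_le_one (by positivity)]; exact hm1
          _ = ENNReal.ofReal (1 / (m:ℝ)) := ENNReal.rpow_one _
      · simp only [Set.indicator_of_notMem hx]
        simp only [abs_zero, zero_div, ENNReal.ofReal_zero]
        exact le_of_eq (ENNReal.zero_rpow_of_pos (lt_of_lt_of_le one_pos (hp1 x)))
    calc (∫⁻ x, (ENNReal.ofReal (|(I.indicator fun _ => (1:ℝ)) x| / m)) ^ (p x))
        ≤ ∫⁻ x, I.indicator (fun _ => ENNReal.ofReal (1 / m)) x := lintegral_mono hpt
      _ = ENNReal.ofReal (1 / m) * volume I := lintegral_indicator_const measurableSet_Icc _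
      _ = ENNReal.ofReal (1 / m * m) := by
          rw [hvolI, ← ENNReal.ofReal_mul (by positivity)]
      _ ≤ 1 := by
          rw [one_div, inv_mul_cancel₀ (by positivity : (m:ℝ) ≠ 0), ENNReal.ofReal_one]
  have hvolU : volume U ≤ ENNReal.ofReal (ρ * ε * m) := by
    calc volume U ≤ ∑ k ∈ Finset.Icc 1 m,
          volume (Set.Icc ((k : ℝ) - ρ * ε / 2) ((k : ℝ) + ρ * ε / 2)) :=
        measure_biUnion_finset_le _ _
      _ = ∑ k ∈ Finset.Icc 1 m, ENNReal.ofReal (ρ * ε) := by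
          apply Finset.sum_congr rfl
          intro k _
          rw [Real.volume_Icc]; ring_nf
      _ = ENNReal.ofReal (ρ * ε * m) := by
          rw [Finset.sum_const, Nat.card_Icc, Nat.add_sub_cancel, nsmul_eq_mul,
            ← ENNReal.ofReal_natCast, ← ENNReal.ofReal_mul (by positivity), mul_comm]
  have hvolF : ENNReal.ofReal ((1 - ρ * ε) * m) ≤ volume F := by
    have hsub : I ⊆ F ∪ U := fun x hx => by
      by_cases hxU : x ∈ U
      · exact Or.inr hxU
      · exact Or.inl ⟨hx, hxU⟩
    have h1 : volume I ≤ volume F + volume U :=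
      le_trans (measure_mono hsub) (measure_union_le _ _)
    have h2 : ENNReal.ofReal ((1 - ρ * ε) * m)
        = ENNReal.ofReal m - ENNReal.ofReal (ρ * ε * m) := by
      rw [← ENNReal.ofReal_sub _ (by positivity)]
      ring_nf
    rw [h2, tsub_le_iff_right]
    calc ENNReal.ofReal m = volume I := hvolI.symm
      _ ≤ volume F + volume U := h1
      _ ≤ volume F + ENNReal.ofReal (ρ * ε * m) := by gcongr
  have hFmeas : MeasurableSet F := by
    apply MeasurableSet.diff measurableSet_Icc
    exact Finset.measurableSet_biUnion _ (fun k _ => measurableSet_Icc)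
  apply le_csInf ⟨(m : ℝ), hmem⟩
  rintro l ⟨hl, hle⟩
  have hpt : F.indicator (fun _ => ENNReal.ofReal (1 / l))
      ≤ fun x => (ENNReal.ofReal (|(I.indicator fun _ => (1:ℝ)) x| / l)) ^ (p x) := by
    intro x
    by_cases hx : x ∈ F
    · simp only [Set.indicator_of_mem hx, Set.indicator_of_mem hx.1]
      simp only [abs_one]
      rw [hpF x hx, ENNReal.rpow_one]
    · rw [Set.indicator_of_notMem hx]
      exact zero_le
  have hkey : ENNReal.ofReal ((1 - ρ * ε) * m / l) ≤ 1 := by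
    calc ENNReal.ofReal ((1 - ρ * ε) * m / l)
        = ENNReal.ofReal (1 / l) * ENNReal.ofReal ((1 - ρ * ε) * m) := by
          rw [← ENNReal.ofReal_mul (by positivity)]; ring_nf
      _ ≤ ENNReal.ofReal (1 / l) * volume F := by gcongr
      _ = ∫⁻ x, F.indicator (fun _ => ENNReal.ofReal (1 / l)) x :=
          (lintegral_indicator_const hFmeas _).symm
      _ ≤ _ := lintegral_mono hpt
      _ ≤ 1 := hle
  rw [← ENNReal.ofReal_one, ENNReal.ofReal_le_ofReal_iff one_pos.le, div_le_one hl] at hkey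
  exact hkey

lemma aux_tendsto (ε ρ : ℝ) (hε : 0 < ε) (hρε : ρ * ε < 1)
    (num den : ℕ → ℝ)
    (hnum : ∀ m : ℕ, 0 < m → num m = Real.sqrt (ε * m))
    (hden : ∀ m : ℕ, 0 < m → (1 - ρ * ε) * m ≤ den m) :
    Tendsto (fun m : ℕ => num m / den m) atTop (nhds 0) := by
  have hρε1 : 0 < 1 - ρ * ε := by linarith
  set c : ℝ := Real.sqrt ε / (1 - ρ * ε) with hc
  have h1 : Tendsto (fun m : ℕ => Real.sqrt (m : ℝ)) atTop atTop := by
    apply Filter.tendsto_atTop_atTop.mpr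
    intro b
    refine ⟨⌈b⌉₊ ^ 2, fun n hn => ?_⟩
    calc b ≤ ⌈b⌉₊ := Nat.le_ceil b
      _ = Real.sqrt ((⌈b⌉₊ : ℝ) ^ 2) := (Real.sqrt_sq (Nat.cast_nonneg _)).symm
      _ ≤ Real.sqrt (n : ℝ) := Real.sqrt_le_sqrt (by exact_mod_cast hn)
  have h2 : Tendsto (fun m : ℕ => (Real.sqrt (m : ℝ))⁻¹) atTop (nhds 0) :=
    h1.inv_tendsto_atTop
  have hg : Tendsto (fun m : ℕ => c * (Real.sqrt (m : ℝ))⁻¹) atTop (nhds 0) := by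
    simpa using h2.const_mul c
  apply tendsto_of_tendsto_of_tendsto_of_le_of_le' tendsto_const_nhds hg
  · filter_upwards [eventually_gt_atTop 0] with m hm
    have h0 : (0 : ℝ) < (1 - ρ * ε) * m := by
      have : (0:ℝ) < m := by exact_mod_cast hm
      positivity
    exact div_nonneg (by rw [hnum m hm]; positivity) (le_trans h0.le (hden m hm))
  · filter_upwards [eventually_gt_atTop 0] with m hm
    have hm0 : (0 : ℝ) < m := by exact_mod_cast hm
    have h0 : (0 : ℝ) < (1 - ρ * ε) * m := by positivity
    have hsm : (0 : ℝ) < Real.sqrt (m : ℝ) := Real.sqrt_pos.mpr hm0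
    rw [hnum m hm]
    calc Real.sqrt (ε * m) / den m ≤ Real.sqrt (ε * m) / ((1 - ρ * ε) * m) := by
          apply div_le_div_of_nonneg_left (Real.sqrt_nonneg _) h0 (hden m hm)
      _ = c * (Real.sqrt (m : ℝ))⁻¹ := by
          rw [Real.sqrt_mul hε.le, hc,
            ← div_mul_div_comm, Real.sqrt_div_self]

/-- With `p(x) = 1 + Σ_{k≥1} φ(x-k)` for a smooth bump `φ` (`0 ≤ φ ≤ 1`, supported in
`[-ρε/2, ρε/2]`, equal to `1` on `[-ε/2, ε/2]`, `0 < ε`, `1 < ρ`, `ρε < 1`),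
for `I = [ε/2, m+ε/2]` and `E = ⋃_{k=1}^m [k-ε/2, k+ε/2]`:
`|E| = εm = ε|I|`, `‖χ_E‖_{L^{p(·)}} = (εm)^{1/2}`, `‖χ_I‖_{L^{p(·)}} ≥ (1-ρε)m`,
and consequently `‖χ_E‖/‖χ_I‖ → 0`, so `L^{p(·)}` fails the `A_ε`-condition. -/
theorem statement16 (ε ρ : ℝ) (hε : 0 < ε) (hρ : 1 < ρ) (hρε : ρ * ε < 1)
    (φ : ℝ → ℝ) (hφ : ContDiff ℝ (⊤ : ℕ∞) φ) (hφ01 : ∀ x, φ x ∈ Set.Icc (0 : ℝ) 1)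
    (hφsupp : ∀ x, x ∉ Set.Icc (-(ρ * ε) / 2) (ρ * ε / 2) → φ x = 0)
    (hφone : ∀ x ∈ Set.Icc (-(ε / 2)) (ε / 2), φ x = 1)
    (p : ℝ → ℝ) (hp : ∀ x, p x = 1 + ∑' k : ℕ, φ (x - (k + 1))) :
    (∀ m : ℕ, 0 < m →
        volume (⋃ k ∈ Finset.Icc 1 m, Set.Icc ((k : ℝ) - ε / 2) ((k : ℝ) + ε / 2))
            = ENNReal.ofReal (ε * m) ∧
          luxNorm p
              ((⋃ k ∈ Finset.Icc 1 m,
                Set.Icc ((k : ℝ) - ε / 2) ((k : ℝ) + ε / 2)).indicator fun _ => (1 : ℝ))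
            = Real.sqrt (ε * m) ∧
          (1 - ρ * ε) * m
            ≤ luxNorm p ((Set.Icc (ε / 2) ((m : ℝ) + ε / 2)).indicator fun _ => (1 : ℝ))) ∧
      Tendsto
        (fun m : ℕ =>
          luxNorm p
              ((⋃ k ∈ Finset.Icc 1 m,
                Set.Icc ((k : ℝ) - ε / 2) ((k : ℝ) + ε / 2)).indicator fun _ => (1 : ℝ)) /
            luxNorm p ((Set.Icc (ε / 2) ((m : ℝ) + ε / 2)).indicator fun _ => (1 : ℝ)))
        atTop (nhds 0) := by
  have hε1 : ε < 1 := lt_trans (lt_mul_of_one_lt_left hε hρ) hρε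
  have hp1 : ∀ x, 1 ≤ p x := aux_p1 φ hφ01 p hp
  have key : ∀ m : ℕ, 0 < m →
      volume (⋃ k ∈ Finset.Icc 1 m, Set.Icc ((k : ℝ) - ε / 2) ((k : ℝ) + ε / 2))
          = ENNReal.ofReal (ε * m) ∧
        luxNorm p
            ((⋃ k ∈ Finset.Icc 1 m,
              Set.Icc ((k : ℝ) - ε / 2) ((k : ℝ) + ε / 2)).indicator fun _ => (1 : ℝ))
          = Real.sqrt (ε * m) ∧
        (1 - ρ * ε) * m
          ≤ luxNorm p ((Set.Icc (ε / 2) ((m : ℝ) + ε / 2)).indicator fun _ => (1 : ℝ)) := by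
    intro m hm
    refine ⟨aux_volE ε hε hε1 m, ?_, ?_⟩
    · apply aux_luxE p hp1 m hm ε hε _
        (Finset.measurableSet_biUnion _ (fun k _ => measurableSet_Icc))
        (aux_volE ε hε hε1 m)
      intro x hx
      obtain ⟨k, hk, hxk⟩ := Set.mem_iUnion₂.mp hx
      exact aux_pE ε ρ hε hρ hρε φ hφsupp hφone p hp k (Finset.mem_Icc.mp hk).1 x hxk
    · apply aux_luxI ε ρ hε hρ hρε p hp1 m hm
      intro x hx
      exact aux_pF ε ρ hε hρ hρε φ hφsupp p hp m x hx.1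
        (fun k hk hxk => hx.2 (Set.mem_iUnion₂.mpr ⟨k, hk, hxk⟩))
  exact ⟨key, aux_tendsto ε ρ hε hρε _ _ (fun m hm => (key m hm).2.1)
    (fun m hm => (key m hm).2.2)⟩

end
end

section
/- Let w be a weight on ℝ and suppose there exists C such that Σ_{P∈𝓕} w(P) ≤ C w(Q) for every cube Q and (1/2)-sparse family 𝓕 ⊂ 𝓓(Q). Then for every f ∈ BMO and every cube Q, (1/w(Q)) ∫_Q |f − ⟨f⟩_Q| w ≤ C'·C·‖f‖_{BMO}, i.e., BMO embeds into BMO_{L¹(w)}, assuming the sparse domination of oscillations (Proposition: for each Q there is a (1/2)-sparse 𝓕 ⊂ 𝓓(Q) with |f − ⟨f⟩_Q|χ_Q ≲ Σ_{P∈𝓕} ⟨|f−⟨f⟩_P|⟩_P χ_P a.e.). -/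
open MeasureTheory Set ENNReal

noncomputable section

/-- A (closed) interval, i.e. a one-dimensional cube. -/
def IsCube1 (Q : Set ℝ) : Prop := ∃ (a r : ℝ), 0 < r ∧ Q = Set.Icc a (a + r)

/-- A `(1/2)`-sparse family of dyadic-like subintervals of `Q`. -/
def IsSparseFamily1 (Q : Set ℝ) (P : ℕ → Set ℝ) : Prop :=
  (∀ i, P i ⊆ Q) ∧ (∀ i, IsCube1 (P i) ∨ P i = ∅) ∧
  (∀ i j, P i ⊆ P j ∨ P j ⊆ P i ∨ Disjoint (P i) (P j)) ∧
  (∀ i j, i ≠ j → P i = P j → P i = ∅) ∧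
  (∀ i, volume (P i) ≤ 2 * volume (P i \ ⋃ j ∈ {j | P j ⊂ P i}, P j))

def avg1 (Q : Set ℝ) (f : ℝ → ℝ) : ℝ := (volume Q).toReal⁻¹ * ∫ x in Q, f x

/-! The sparse domination bounds `|f - ⟨f⟩_Q|` on `Q` by `Cd·B·Σ_{P∈𝓕} χ_P`, since each
oscillation `⟨|f - ⟨f⟩_P|⟩_P` is at most `‖f‖_{BMO} ≤ B`. Integrating against `w` turns
`Σ_{P∈𝓕} χ_P` into `Σ_{P∈𝓕} w(P)`, which the sparse Carleson condition bounds by `C w(Q)`. -/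

lemma ENNReal.ofReal_tsum_le_tsum_ofReal {ι : Type*} {g : ι → ℝ} (hg : ∀ i, 0 ≤ g i) :
    ENNReal.ofReal (∑' i, g i) ≤ ∑' i, ENNReal.ofReal (g i) := by
  by_cases hs : Summable g
  · exact (ENNReal.ofReal_tsum_of_nonneg hg hs).le
  · simp [tsum_eq_zero_of_not_summable hs]

lemma IsCube1.measurableSet {Q : Set ℝ} (hQ : IsCube1 Q) : MeasurableSet Q := by
  obtain ⟨a, r, -, rfl⟩ := hQ
  exact measurableSet_Icc

lemma IsSparseFamily1.measurableSet {Q : Set ℝ} {P : ℕ → Set ℝ} (hP : IsSparseFamily1 Q P)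
    (i : ℕ) : MeasurableSet (P i) := by
  rcases hP.2.1 i with hcube | hempty
  · exact hcube.measurableSet
  · exact hempty ▸ MeasurableSet.empty

lemma avg1_abs_nonneg (Q : Set ℝ) (g : ℝ → ℝ) : 0 ≤ avg1 Q (fun y => |g y|) :=
  mul_nonneg (by positivity) (integral_nonneg fun _ => abs_nonneg _)

lemma IsSparseFamily1.avg1_oscillation_le {Q : Set ℝ} {P : ℕ → Set ℝ}
    (hP : IsSparseFamily1 Q P) {f : ℝ → ℝ} {B : ℝ} (hB0 : 0 ≤ B)
    (hB : ∀ R, IsCube1 R → avg1 R (fun y => |f y - avg1 R f|) ≤ B) (i : ℕ) :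
    avg1 (P i) (fun y => |f y - avg1 (P i) f|) ≤ B := by
  rcases hP.2.1 i with hcube | hempty
  · exact hB _ hcube
  · simp [avg1, hempty, hB0]

lemma ofReal_le_mul_tsum_indicator_of_le {α : Type*} {P : ℕ → Set α} {a : ℕ → ℝ} {c B y : ℝ}
    (hc : 0 ≤ c) (ha0 : ∀ i, 0 ≤ a i) (haB : ∀ i, a i ≤ B) {x : α}
    (hy : y ≤ c * ∑' i, a i * (P i).indicator (fun _ => (1 : ℝ)) x) :
    ENNReal.ofReal y ≤ ENNReal.ofReal (c * B) * ∑' i, (P i).indicator (fun _ => (1 : ℝ≥0∞)) x := by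
  have hterm : ∀ i, ENNReal.ofReal (a i * (P i).indicator (fun _ => (1 : ℝ)) x)
      ≤ ENNReal.ofReal B * (P i).indicator (fun _ => (1 : ℝ≥0∞)) x := fun i => by
    by_cases hx : x ∈ P i
    · simpa [hx] using ENNReal.ofReal_le_ofReal (haB i)
    · simp [hx]
  calc ENNReal.ofReal y
      ≤ ENNReal.ofReal c * ENNReal.ofReal (∑' i, a i * (P i).indicator (fun _ => (1 : ℝ)) x) := by
        rw [← ENNReal.ofReal_mul hc]
        exact ENNReal.ofReal_le_ofReal hy
    _ ≤ ENNReal.ofReal c * ∑' i, ENNReal.ofReal (a i * (P i).indicator (fun _ => (1 : ℝ)) x) := by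
        gcongr
        exact ENNReal.ofReal_tsum_le_tsum_ofReal fun i =>
          mul_nonneg (ha0 i) (indicator_nonneg (fun _ _ => zero_le_one) x)
    _ ≤ ENNReal.ofReal c * ∑' i, ENNReal.ofReal B * (P i).indicator (fun _ => (1 : ℝ≥0∞)) x := by
        gcongr with i
        exact hterm i
    _ = ENNReal.ofReal (c * B) * ∑' i, (P i).indicator (fun _ => (1 : ℝ≥0∞)) x := by
        rw [ENNReal.tsum_mul_left, ← mul_assoc, ← ENNReal.ofReal_mul hc]

lemma setLIntegral_tsum_indicator_mul {α : Type*} [MeasurableSpace α] {μ : Measure α}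
    {w : α → ℝ≥0∞} (hw : Measurable w) {Q : Set α} {P : ℕ → Set α}
    (hP : ∀ i, MeasurableSet (P i)) (hPQ : ∀ i, P i ⊆ Q) :
    ∫⁻ x in Q, (∑' i, (P i).indicator (fun _ => (1 : ℝ≥0∞)) x) * w x ∂μ
      = ∑' i, ∫⁻ x in P i, w x ∂μ := by
  have hpoint : ∀ x, (∑' i, (P i).indicator (fun _ => (1 : ℝ≥0∞)) x) * w x
      = ∑' i, (P i).indicator w x := fun x => by
    rw [← ENNReal.tsum_mul_right]
    congr 1 with i
    by_cases hx : x ∈ P i <;> simp [hx]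
  simp_rw [hpoint]
  rw [lintegral_tsum fun i => (hw.indicator (hP i)).aemeasurable]
  congr 1 with i
  rw [lintegral_indicator (hP i), Measure.restrict_restrict (hP i),
    inter_eq_self_of_subset_left (hPQ i)]

theorem statement19_general
    (w : ℝ → ℝ≥0∞) (hw : Measurable w)
    (C : ℝ≥0∞)
    (hC : ∀ Q, IsCube1 Q → ∀ P : ℕ → Set ℝ, IsSparseFamily1 Q P →
      ∑' i, ∫⁻ x in P i, w x ≤ C * ∫⁻ x in Q, w x)
    (Cd : ℝ) (hCd : 0 ≤ Cd)
    (hdom : ∀ f : ℝ → ℝ, LocallyIntegrable f → ∀ Q, IsCube1 Q →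
      ∃ P : ℕ → Set ℝ, IsSparseFamily1 Q P ∧
        ∀ᵐ x, x ∈ Q → |f x - avg1 Q f|
          ≤ Cd * ∑' i, avg1 (P i) (fun y => |f y - avg1 (P i) f|)
              * (P i).indicator (fun _ => (1 : ℝ)) x)
    (f : ℝ → ℝ) (hf : LocallyIntegrable f)
    (B : ℝ) (hB0 : 0 ≤ B)
    (hB : ∀ R, IsCube1 R → avg1 R (fun y => |f y - avg1 R f|) ≤ B)
    (Q : Set ℝ) (hQ : IsCube1 Q) :
    ∫⁻ x in Q, ENNReal.ofReal |f x - avg1 Q f| * w x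
      ≤ ENNReal.ofReal (Cd * B) * C * ∫⁻ x in Q, w x := by
  obtain ⟨P, hP, hsparse⟩ := hdom f hf Q hQ
  have hpoint : ∀ᵐ x ∂volume.restrict Q, ENNReal.ofReal |f x - avg1 Q f| * w x
      ≤ ENNReal.ofReal (Cd * B) * (∑' i, (P i).indicator (fun _ => (1 : ℝ≥0∞)) x) * w x := by
    rw [ae_restrict_iff' hQ.measurableSet]
    filter_upwards [hsparse] with x hx hxQ
    gcongr
    exact ofReal_le_mul_tsum_indicator_of_le hCd (fun i => avg1_abs_nonneg _ _)
      (hP.avg1_oscillation_le hB0 hB) (hx hxQ)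
  calc ∫⁻ x in Q, ENNReal.ofReal |f x - avg1 Q f| * w x
      ≤ ∫⁻ x in Q, ENNReal.ofReal (Cd * B) * ((∑' i, (P i).indicator (fun _ => 1) x) * w x) := by
        simpa only [mul_assoc] using lintegral_mono_ae hpoint
    _ = ENNReal.ofReal (Cd * B) * ∑' i, ∫⁻ x in P i, w x := by
        have hmeas : Measurable fun x => (∑' i, (P i).indicator (fun _ => (1 : ℝ≥0∞)) x) * w x :=
          (Measurable.tsum fun i => measurable_const.indicator (hP.measurableSet i)).mul hw
        rw [lintegral_const_mul _ hmeas, setLIntegral_tsum_indicator_mul hw hP.measurableSet hP.1]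
    _ ≤ ENNReal.ofReal (Cd * B) * C * ∫⁻ x in Q, w x := by
        rw [mul_assoc]
        gcongr
        exact hC Q hQ P hP

/-- If `Σ_{P ∈ 𝓕} w(P) ≤ C w(Q)` for every cube `Q` and `(1/2)`-sparse `𝓕 ⊂ 𝓓(Q)`, then
(assuming the sparse domination of oscillations with constant `Cd`) every `f ∈ BMO`
(with `‖f‖_{BMO} ≤ B`) satisfies `(1/w(Q)) ∫_Q |f - ⟨f⟩_Q| w ≤ Cd·C·B` for all cubes `Q`,
i.e. `BMO ↪ BMO_{L¹(w)}`. -/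
theorem statement19
    (w : ℝ → ℝ≥0∞) (hw : Measurable w) (hwpos : ∀ x, 0 < w x)
    (hwloc : ∀ Q, IsCube1 Q → (∫⁻ x in Q, w x) < ⊤)
    (C : ℝ≥0∞) (hCfin : C < ⊤)
    (hC : ∀ Q, IsCube1 Q → ∀ P : ℕ → Set ℝ, IsSparseFamily1 Q P →
      ∑' i, ∫⁻ x in P i, w x ≤ C * ∫⁻ x in Q, w x)
    (Cd : ℝ) (hCd : 0 ≤ Cd)
    (hdom : ∀ f : ℝ → ℝ, LocallyIntegrable f → ∀ Q, IsCube1 Q →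
      ∃ P : ℕ → Set ℝ, IsSparseFamily1 Q P ∧
        ∀ᵐ x, x ∈ Q → |f x - avg1 Q f|
          ≤ Cd * ∑' i, avg1 (P i) (fun y => |f y - avg1 (P i) f|)
              * (P i).indicator (fun _ => (1 : ℝ)) x)
    (f : ℝ → ℝ) (hf : LocallyIntegrable f)
    (B : ℝ) (hB0 : 0 ≤ B)
    (hB : ∀ R, IsCube1 R → avg1 R (fun y => |f y - avg1 R f|) ≤ B)
    (Q : Set ℝ) (hQ : IsCube1 Q) :
    ∫⁻ x in Q, ENNReal.ofReal |f x - avg1 Q f| * w x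
      ≤ ENNReal.ofReal (Cd * B) * C * ∫⁻ x in Q, w x :=
  statement19_general w hw C hC Cd hCd hdom f hf B hB0 hB Q hQ
end
end
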